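/- arXiv:1903.11378 — 6 statements merged into one kernel-verified Lean document; each statement's English description precedes it below -/
import Mathlib

section
/- If f ∈ C[-1,1] belongs to both the principal ideal generated by the identity function id(x) = x and the principal ideal generated by |id|(x) = |x| in the ring C[-1,1] of continuous real-valued functions on [-1,1], then f = g·id for some continuous g : [-1,1] → ℝ with g(0) = 0. -/
noncomputable section

abbrev X : Type := Set.Icc (-1:ℝ) 1

def idf : C(X, ℝ) := ⟨fun x => (x : ℝ), continuous_subtype_val⟩
def absf : C(X, ℝ) := ⟨fun x => |(x : ℝ)|, continuous_subtype_val.abs⟩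
def x0 : X := ⟨0, by norm_num⟩

/-! Near `0`, `a x * x = b x * |x|` forces `a = b` on the right of `0` and `a = -b` on its left.
Both one-sided neighbourhoods are nontrivial, so continuity at `0` gives `a 0 = b 0 = -b 0`,
hence `a 0 = 0`, and `a` itself is the required `g`. -/

open Filter Topology Set

theorem eq_zero_of_eventually_mul_self_eq_mul_abs {a b : ℝ → ℝ} (ha : ContinuousAt a 0)
    (hb : ContinuousAt b 0) (h : ∀ᶠ x in 𝓝 0, a x * x = b x * |x|) : a 0 = 0 := by
  have h_right : a =ᶠ[𝓝[>] 0] b := by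
    filter_upwards [nhdsWithin_le_nhds h, self_mem_nhdsWithin] with x hx (hpos : 0 < x)
    rw [abs_of_pos hpos] at hx
    exact mul_right_cancel₀ hpos.ne' hx
  have h_left : a =ᶠ[𝓝[<] 0] -b := by
    filter_upwards [nhdsWithin_le_nhds h, self_mem_nhdsWithin] with x hx (hneg : x < 0)
    rw [abs_of_neg hneg, mul_neg, ← neg_mul] at hx
    exact mul_right_cancel₀ hneg.ne hx
  have hab : a 0 = b 0 := tendsto_nhds_unique_of_eventuallyEq
    (ha.tendsto.mono_left nhdsWithin_le_nhds) (hb.tendsto.mono_left nhdsWithin_le_nhds) h_right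
  have hab' : a 0 = -b 0 := tendsto_nhds_unique_of_eventuallyEq
    (ha.tendsto.mono_left nhdsWithin_le_nhds) (hb.neg.tendsto.mono_left nhdsWithin_le_nhds) h_left
  linarith

theorem apply_x0_eq_zero_of_mul_idf_eq_mul_absf {a b : C(X, ℝ)} (h : a * idf = b * absf) :
    a x0 = 0 := by
  let proj : ℝ → X := projIcc (-1) 1 (by norm_num)
  have h_near : ∀ᶠ x in 𝓝 (0 : ℝ), a (proj x) * x = b (proj x) * |x| := by
    filter_upwards [Icc_mem_nhds (by norm_num : (-1 : ℝ) < 0) one_pos] with x hx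
    simpa [idf, absf, proj, projIcc_of_mem _ hx] using congr($h (proj x))
  have hcont : Continuous proj := continuous_projIcc
  have h_zero : proj 0 = x0 := projIcc_of_mem _ ⟨by norm_num, by norm_num⟩
  simpa [h_zero] using eq_zero_of_eventually_mul_self_eq_mul_abs
    (a.continuous.comp hcont).continuousAt (b.continuous.comp hcont).continuousAt h_near

theorem stmt0 (f : C(X, ℝ)) (h1 : ∃ a : C(X, ℝ), f = a * idf)
    (h2 : ∃ b : C(X, ℝ), f = b * absf) :
    ∃ g : C(X, ℝ), g x0 = 0 ∧ f = g * idf := by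
  obtain ⟨a, rfl⟩ := h1
  obtain ⟨b, hb⟩ := h2
  exact ⟨a, apply_x0_eq_zero_of_mul_idf_eq_mul_absf hb, rfl⟩
end
end

section
/- If g : [-1,1] → ℝ is continuous with g(0) = 0, then the function f(x) = g(x)·x belongs to the intersection of the principal ideal generated by id(x) = x and the principal ideal generated by |id|(x) = |x| in C[-1,1]. -/
noncomputable section

namespace ContinuousMap

variable {α : Type*} [TopologicalSpace α]

/-- The witness is `b = sign f • g`, which is continuous because `g` vanishes wherever the sign
of `f` can jump. -/
theorem exists_mul_eq_mul_abs_of_eq_zero {f g : C(α, ℝ)} (hg : ∀ x, f x = 0 → g x = 0) :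
    ∃ b : C(α, ℝ), g * f = b * |f| := by
  refine ⟨⟨fun x => if f x ≤ 0 then -g x else g x, ?_⟩, ?_⟩
  · refine Continuous.if_le (by fun_prop) (by fun_prop) f.continuous continuous_const ?_
    intro x hx
    simp [hg x hx]
  · ext x
    simp only [mul_apply, coe_mk, abs_apply]
    split_ifs with h
    · rw [abs_of_nonpos h]; ring
    · rw [abs_of_pos (not_le.mp h)]

end ContinuousMap

theorem stmt1 (g : C(X, ℝ)) (hg : g x0 = 0) :
    (∃ a : C(X, ℝ), g * idf = a * idf) ∧ (∃ b : C(X, ℝ), g * idf = b * absf) := by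
  have habs : absf = |idf| := by ext; rfl
  refine ⟨⟨g, rfl⟩, habs ▸ ContinuousMap.exists_mul_eq_mul_abs_of_eq_zero fun x hx => ?_⟩
  rwa [show x = x0 from Subtype.ext hx]
end
end

section
/- The intersection of the principal ideals generated by id(x) = x and |id|(x) = |x| in C[-1,1] equals exactly the set {g·id : g ∈ C[-1,1], g(0) = 0}. -/
/-!
If `f = a·x = b·|x|`, then `a = b` where `x > 0` and `a = -b` where `x < 0`; since `0` lies in
the closure of both half-intervals, continuity forces `a(0) = b(0) = -b(0)`, so `a(0) = 0`.
Conversely, if `g(0) = 0` then `g·sign` is continuous and `g·x = (g·sign)·|x|`.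
-/

noncomputable section

open Set

namespace ContinuousMap

variable {α : Type*} [TopologicalSpace α]

theorem apply_eq_zero_of_mul_eq_mul_abs {a b h : C(α, ℝ)} (hab : a * h = b * |h|) {x : α}
    (hpos : x ∈ closure {y | 0 < h y}) (hneg : x ∈ closure {y | h y < 0}) : a x = 0 := by
  have hab' (y : α) : a y * h y = b y * |h y| := by simpa using congr($hab y)
  have eq_pos : EqOn a b {y | 0 < h y} := fun y hy =>
    mul_right_cancel₀ hy.ne' (by rw [hab', abs_of_pos hy])
  have eq_neg : EqOn a (-b) {y | h y < 0} := fun y hy =>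
    mul_right_cancel₀ hy.ne (by rw [hab', abs_of_neg hy]; simp)
  have h₁ : a x = b x := eq_pos.closure a.continuous b.continuous hpos
  have h₂ : a x = -b x := eq_neg.closure a.continuous (-b).continuous hneg
  linarith

theorem exists_mul_abs_eq_mul {g h : C(α, ℝ)} (hg : ∀ x, h x = 0 → g x = 0) :
    ∃ b : C(α, ℝ), b * |h| = g * h := by
  refine ⟨⟨fun x => if 0 ≤ h x then g x else -g x, ?_⟩, ?_⟩
  · exact g.continuous.if_le g.continuous.neg continuous_const h.continuous
      fun x hx => by simp [hg x hx.symm]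
  · ext x
    simp only [mul_apply, abs_apply, coe_mk]
    split_ifs with hx
    · rw [abs_of_nonneg hx]
    · rw [abs_of_neg (not_le.mp hx), neg_mul_neg]

end ContinuousMap

lemma absf_eq_abs_idf : absf = |idf| := by
  ext
  simp [absf, idf]

lemma x0_mem_closure_setOf_pos : x0 ∈ closure {x : X | 0 < idf x} := by
  rw [closure_subtype]
  refine closure_mono (s := Ioo 0 1) ?_ (by simp [closure_Ioo, x0])
  exact fun t ht => ⟨⟨t, ht.1.le.trans' (by norm_num), ht.2.le⟩, ht.1, rfl⟩

lemma x0_mem_closure_setOf_neg : x0 ∈ closure {x : X | idf x < 0} := by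
  rw [closure_subtype]
  refine closure_mono (s := Ioo (-1) 0) ?_ (by simp [closure_Ioo, x0])
  exact fun t ht => ⟨⟨t, ht.1.le, ht.2.le.trans (by norm_num)⟩, ht.2, rfl⟩

theorem stmt2 :
    {f : C(X, ℝ) | (∃ a : C(X, ℝ), f = a * idf) ∧ (∃ b : C(X, ℝ), f = b * absf)} =
      {f : C(X, ℝ) | ∃ g : C(X, ℝ), g x0 = 0 ∧ f = g * idf} := by
  ext f
  constructor
  · rintro ⟨⟨a, rfl⟩, b, hb⟩
    rw [absf_eq_abs_idf] at hb
    exact ⟨a, ContinuousMap.apply_eq_zero_of_mul_eq_mul_abs hb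
      x0_mem_closure_setOf_pos x0_mem_closure_setOf_neg, rfl⟩
  · rintro ⟨g, hg, rfl⟩
    have hg_zero (x : X) (hx : idf x = 0) : g x = 0 := by
      rwa [show x = x0 from Subtype.ext hx]
    obtain ⟨b, hb⟩ := ContinuousMap.exists_mul_abs_eq_mul hg_zero
    exact ⟨⟨g, rfl⟩, b, by rw [absf_eq_abs_idf, hb]⟩
end
end

section
/- Let g₁, …, g_k ∈ C[-1,1] with g_i(0) = 0 for all i, and let a₁, …, a_k ∈ C[-1,1]. Then the equation max{√|g₁|, …, √|g_k|} + |id| = a₁g₁ + ⋯ + a_k g_k cannot hold on [-1,1]. -/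
/-!
Write `s = maxᵢ √|gᵢ|`, so that `|gᵢ| ≤ s²` and the right-hand side is at most `C s²` with
`C = ∑ ‖aᵢ‖`. Since `s` is continuous and vanishes at `0`, near `0` we have `C s < 1`, hence
`C s² ≤ s`, and the equation would force `s + |x| ≤ s`, impossible at any `x ≠ 0`.
-/

noncomputable section

open Filter Topology

lemma not_add_le_mul_sq {s t C : ℝ} (hs : 0 ≤ s) (ht : 0 < t) (hCs : C * s < 1) :
    ¬ s + t ≤ C * s ^ 2 := by
  intro h
  nlinarith [mul_le_mul_of_nonneg_right hCs.le hs]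

lemma abs_le_sup'_sqrt_abs_sq {ι : Type*} {s : Finset ι} (H : s.Nonempty) (f : ι → ℝ) {i : ι}
    (hi : i ∈ s) : |f i| ≤ (s.sup' H fun j => Real.sqrt |f j|) ^ 2 :=
  calc |f i| = Real.sqrt |f i| ^ 2 := (Real.sq_sqrt (abs_nonneg _)).symm
    _ ≤ _ := pow_le_pow_left₀ (Real.sqrt_nonneg _) (s.le_sup' (fun j => Real.sqrt |f j|) hi) 2

lemma sum_apply_mul_le_sum_norm_mul {Y ι : Type*} [TopologicalSpace Y] [CompactSpace Y]
    [Fintype ι] (a g : ι → C(Y, ℝ)) {y : Y} {m : ℝ} (hg : ∀ i, |g i y| ≤ m) :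
    ∑ i, a i y * g i y ≤ (∑ i, ‖a i‖) * m := by
  rw [Finset.sum_mul]
  refine Finset.sum_le_sum fun i _ => ?_
  calc a i y * g i y ≤ |a i y| * |g i y| := by rw [← abs_mul]; exact le_abs_self _
    _ ≤ ‖a i‖ * m := mul_le_mul ((a i).norm_coe_le_norm y) (hg i) (abs_nonneg _) (norm_nonneg _)

lemma frequently_coe_ne_zero : ∃ᶠ x : X in 𝓝 x0, (x : ℝ) ≠ 0 := by
  have hproj : Tendsto (Set.projIcc (-1 : ℝ) 1 (by norm_num)) (𝓝[>] 0) (𝓝 x0) :=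
    (continuous_projIcc.tendsto' 0 x0 (Set.projIcc_of_mem _ ⟨by norm_num, by norm_num⟩)).mono_left
      nhdsWithin_le_nhds
  refine hproj.frequently (Eventually.frequently ?_)
  filter_upwards [Ioo_mem_nhdsGT (show (0 : ℝ) < 1 by norm_num)] with t ht
  rw [Set.projIcc_of_mem _ ⟨by linarith [ht.1], ht.2.le⟩]
  exact ht.1.ne'

theorem stmt4 (k : ℕ) (hk : 0 < k) (g a : Fin k → C(X, ℝ))
    (hg : ∀ i, g i x0 = 0) :
    ¬ ∀ x : X,
        (Finset.univ.sup' ⟨⟨0, hk⟩, Finset.mem_univ _⟩ fun i => Real.sqrt |g i x|)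
            + |(x : ℝ)| = ∑ i, a i x * g i x := by
  intro h
  set s : X → ℝ := fun x => Finset.univ.sup' ⟨⟨0, hk⟩, Finset.mem_univ _⟩ fun i => Real.sqrt |g i x|
  set C := ∑ i, ‖a i‖
  have hs_cont : Continuous s := Continuous.finset_sup'_apply _ fun i _ => (g i).continuous.abs.sqrt
  have hs_x0 : s x0 = 0 := by
    simp only [s, hg, abs_zero, Real.sqrt_zero]
    exact Finset.sup'_const _ _
  have hs_small : ∀ᶠ x in 𝓝 x0, C * s x < 1 := by
    have : Tendsto (fun x => C * s x) (𝓝 x0) (𝓝 0) := by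
      simpa [hs_x0] using (hs_cont.tendsto x0).const_mul C
    exact this.eventually (gt_mem_nhds one_pos)
  obtain ⟨x, hx_small, hx_ne⟩ := (hs_small.and_frequently frequently_coe_ne_zero).exists
  have hs_nonneg : 0 ≤ s x := (Real.sqrt_nonneg _).trans
    (Finset.le_sup' (fun i => Real.sqrt |g i x|) (Finset.mem_univ (⟨0, hk⟩ : Fin k)))
  refine not_add_le_mul_sq hs_nonneg (abs_pos.2 hx_ne) hx_small ?_
  rw [h x]
  exact sum_apply_mul_le_sum_norm_mul a g fun i =>
    abs_le_sup'_sqrt_abs_sq _ (fun j => g j x) (Finset.mem_univ i)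
end
end

section
/- The ideal I = Ideal(id) ∩ Ideal(|id|) in the ring C[-1,1] is not finitely generated: there is no finite set f₁, …, f_k ∈ C[-1,1] such that I = {a₁f₁ + ⋯ + a_k f_k : a_i ∈ C[-1,1]}. -/
/-!
Each generator is `a x` with `a(0) = 0`, since comparing the one-sided limits of `a x = b |x|`
at `0` gives `a(0) = b(0) = -b(0)`. Conversely `x g` lies in the ideal for every `g` vanishing
at `0`, so after cancelling `x` the `aᵢ` would generate the maximal ideal at `0`. They do not:
for `g = √(∑ |aᵢ| + |x|)` an identity `g = ∑ cᵢ aᵢ` gives `g ≤ C g²` with `C = ∑ |cᵢ|`, hence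
`C g ≥ 1` away from `0`, against `g(0) = 0`.
-/

noncomputable section

open Filter Topology Set

namespace ContinuousMap

theorem exists_apply_eq_zero_forall_ne_sum_mul {X ι : Type*} [MetricSpace X] [Fintype ι]
    {x₀ : X} [(𝓝[≠] x₀).NeBot] (a : ι → C(X, ℝ)) (ha : ∀ i, a i x₀ = 0) :
    ∃ g : C(X, ℝ), g x₀ = 0 ∧ ∀ c : ι → C(X, ℝ), g ≠ ∑ i, c i * a i := by
  set s : X → ℝ := fun x => ∑ i, |a i x|
  have hs_nonneg (x : X) : 0 ≤ s x := Finset.sum_nonneg fun i _ => abs_nonneg _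
  let g : C(X, ℝ) := ⟨fun x => √(s x + dist x x₀), by fun_prop⟩
  refine ⟨g, by simp [g, s, ha], fun c hc => ?_⟩
  set C : X → ℝ := fun x => ∑ i, |c i x|
  have hC : Continuous C := by fun_prop
  have hC_ge (x : X) (i : ι) : |c i x| ≤ C x :=
    Finset.single_le_sum (f := fun i => |c i x|) (fun _ _ => abs_nonneg _) (Finset.mem_univ i)
  have hCg (x : X) (hx : x ≠ x₀) : 1 ≤ C x * g x := by
    have hd : 0 < dist x x₀ := dist_pos.2 hx
    have hg_pos : 0 < g x := Real.sqrt_pos.2 (by linarith [hs_nonneg x])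
    have hg_sq : g x * g x = s x + dist x x₀ := Real.mul_self_sqrt (by linarith [hs_nonneg x])
    refine le_of_mul_le_mul_right ?_ hg_pos
    calc 1 * g x = ∑ i, c i x * a i x := by simpa using congr($hc x)
      _ ≤ ∑ i, C x * |a i x| := Finset.sum_le_sum fun i _ =>
        (le_abs_self _).trans <| (abs_mul _ _).trans_le <|
          mul_le_mul_of_nonneg_right (hC_ge x i) (abs_nonneg _)
      _ = C x * s x := (Finset.mul_sum _ _ _).symm
      _ ≤ C x * (g x * g x) := mul_le_mul_of_nonneg_left (by linarith)
        (Finset.sum_nonneg fun i _ => abs_nonneg _)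
      _ = C x * g x * g x := (mul_assoc _ _ _).symm
  have : 1 ≤ C x₀ * g x₀ :=
    ge_of_tendsto ((hC.mul g.continuous).continuousAt.mono_left nhdsWithin_le_nhds)
      (eventually_nhdsWithin_of_forall (s := {x₀}ᶜ) hCg)
  norm_num [g, s, ha] at this

end ContinuousMap

theorem nonempty_Ioi_x0 : (Ioi x0).Nonempty :=
  ⟨⟨1, by norm_num⟩, by simp [x0, ← Subtype.coe_lt_coe]⟩

theorem nonempty_Iio_x0 : (Iio x0).Nonempty :=
  ⟨⟨-1, by norm_num⟩, by simp [x0, ← Subtype.coe_lt_coe]⟩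

instance nhdsNE_x0_neBot : (𝓝[≠] x0).NeBot :=
  (nhdsGT_neBot_of_exists_gt nonempty_Ioi_x0).mono
    (nhdsWithin_mono x0 fun _ hx => ne_of_gt hx : 𝓝[>] x0 ≤ 𝓝[≠] x0)

theorem exists_idf_mul_eq_mul_absf {g : C(X, ℝ)} (hg : g x0 = 0) :
    ∃ b : C(X, ℝ), idf * g = b * absf := by
  have hg' (x : X) (hx : (x : ℝ) = 0) : g x = 0 := by rwa [show x = x0 from Subtype.ext hx]
  refine ⟨⟨fun x => if (x : ℝ) ≤ 0 then -g x else g x,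
    Continuous.if_le g.continuous.neg g.continuous continuous_subtype_val continuous_const
      fun x hx => by simp [hg' x hx]⟩, ?_⟩
  ext x
  simp only [ContinuousMap.mul_apply, ContinuousMap.coe_mk, idf, absf]
  split_ifs with hx
  · rw [abs_of_nonpos hx]; ring
  · rw [abs_of_pos (not_le.1 hx)]; ring

theorem idf_mul_injective : Function.Injective (idf * ·) := fun g g' h =>
  ContinuousMap.ext <| congrFun <| Continuous.ext_on (dense_compl_singleton x0) g.continuous
    g'.continuous fun x (hx : x ≠ x0) =>
      mul_left_cancel₀ (fun h0 => hx (Subtype.ext h0)) congr($h x)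

theorem stmt5 :
    ¬ ∃ (k : ℕ) (f : Fin k → C(X, ℝ)),
        {h : C(X, ℝ) | (∃ a : C(X, ℝ), h = a * idf) ∧ (∃ b : C(X, ℝ), h = b * absf)} =
          {h : C(X, ℝ) | ∃ a : Fin k → C(X, ℝ), h = ∑ i, a i * f i} := by
  rintro ⟨k, f, hI⟩
  have hf (i : Fin k) : ∃ a : C(X, ℝ), a x0 = 0 ∧ f i = a * idf := by
    have hfi : f i ∈ {h : C(X, ℝ) | ∃ c : Fin k → C(X, ℝ), h = ∑ j, c j * f j} :=
      ⟨Pi.single i 1, by simp [Pi.single_apply]⟩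
    obtain ⟨⟨a, ha⟩, b, hb⟩ := hI ▸ hfi
    exact ⟨a, apply_x0_eq_zero_of_mul_idf_eq_mul_absf (ha.symm.trans hb), ha⟩
  choose a ha0 hfa using hf
  obtain ⟨g, hg0, hg⟩ := ContinuousMap.exists_apply_eq_zero_forall_ne_sum_mul a ha0
  have hmem : idf * g ∈ {h : C(X, ℝ) | (∃ a, h = a * idf) ∧ ∃ b, h = b * absf} :=
    ⟨⟨g, mul_comm _ _⟩, exists_idf_mul_eq_mul_absf hg0⟩
  obtain ⟨c, hc⟩ := hI ▸ hmem
  refine hg c (idf_mul_injective (hc.trans ?_))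
  show ∑ i, c i * f i = idf * ∑ i, c i * a i
  simp only [hfa, Finset.mul_sum, mul_left_comm idf, mul_comm _ idf]
end
end

section
/- In the ring C[-1,1], the element |id| (the function x ↦ |x|) divides g·id (where g ∈ C[-1,1], g(0) = 0): i.e., there exists g₁ ∈ C[-1,1] with g₁·|id| = g·id. -/
noncomputable section

/-- The quotient is `sign f * g`; it is continuous across the zero set of `f` because `g`
vanishes there, so both branches agree. -/
theorem ContinuousMap.exists_mul_abs_eq_mul_of_vanishing {α : Type*} [TopologicalSpace α]
    (f g : C(α, ℝ)) (hfg : ∀ x, f x = 0 → g x = 0) :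
    ∃ k : C(α, ℝ), ∀ x, k x * |f x| = g x * f x := by
  have hk : Continuous fun x => if 0 ≤ f x then g x else -g x :=
    Continuous.if_le g.continuous g.continuous.neg continuous_const f.continuous
      fun x hx => by simp [hfg x hx.symm]
  refine ⟨⟨_, hk⟩, fun x => ?_⟩
  by_cases hx : 0 ≤ f x
  · simp [hx, abs_of_nonneg hx]
  · simp [hx, abs_of_neg (not_le.mp hx)]

theorem stmt13 (g : C(X, ℝ)) (hg : g x0 = 0) :
    ∃ g₁ : C(X, ℝ), g₁ * absf = g * idf := by
  have hvanish : ∀ x, idf x = 0 → g x = 0 := fun x hx => by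
    rwa [show x = x0 from Subtype.ext hx]
  obtain ⟨k, hk⟩ := ContinuousMap.exists_mul_abs_eq_mul_of_vanishing idf g hvanish
  exact ⟨k, ContinuousMap.ext hk⟩
end
end
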